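/- arXiv:2605.29361 — 5 statements merged into one kernel-verified Lean document; each statement's English description precedes it below -/
import Mathlib

section
/- Let L ≥ 2 and K ≥ 1, and let ρ_ℓ^k > 0 for ℓ ∈ [L], k ∈ [K] satisfy the telescoping property ∏_{ℓ=1}^L ρ_ℓ^k = 1 for every k. Define the Carli index ρ̄_ℓ = (1/K) ∑_{k=1}^K ρ_ℓ^k. Then ∏_{ℓ=1}^L ρ̄_ℓ ≥ 1, with equality if and only if for each ℓ the values ρ_ℓ^k are constant in k. -/
/-!
On each edge the arithmetic mean of the ratios dominates their geometric mean (AM-GM), and the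
geometric means telescope around the cycle just as the ratios do, so their product is 1. Since
the geometric means are positive, the product of the arithmetic means equals 1 only if AM-GM is
an equality on every edge, i.e. only if the ratios on each edge agree across goods.
-/

open Finset Real

lemma Finset.prod_eq_prod_iff_of_pos_of_le {ι R : Type*} [CommMonoidWithZero R] [PartialOrder R]
    [ZeroLEOneClass R] [PosMulStrictMono R] [Nontrivial R] {s : Finset ι} {f g : ι → R}
    (hf : ∀ i ∈ s, 0 < f i) (hfg : ∀ i ∈ s, f i ≤ g i) :
    ∏ i ∈ s, f i = ∏ i ∈ s, g i ↔ ∀ i ∈ s, f i = g i := by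
  refine ⟨fun h => ?_, prod_congr rfl⟩
  by_contra! hne
  obtain ⟨i, hi, hfgi⟩ := hne
  exact (prod_lt_prod hf hfg ⟨i, hi, (hfg i hi).lt_of_ne hfgi⟩).ne h

section WeightedMeans

variable {ι κ : Type*} [Fintype ι] [Fintype κ] (w : κ → ℝ) (ρ : ι → κ → ℝ)

theorem prod_weightedGeomMean_eq_one (hρ : ∀ ℓ k, 0 ≤ ρ ℓ k) (htel : ∀ k, ∏ ℓ, ρ ℓ k = 1) :
    ∏ ℓ, ∏ k, ρ ℓ k ^ w k = 1 := by
  rw [prod_comm]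
  refine prod_eq_one fun k _ => ?_
  rw [finsetProd_rpow _ _ (fun ℓ _ => hρ ℓ k), htel k, one_rpow]

theorem one_le_prod_weightedMean (hw : ∀ k, 0 ≤ w k) (hw1 : ∑ k, w k = 1)
    (hρ : ∀ ℓ k, 0 ≤ ρ ℓ k) (htel : ∀ k, ∏ ℓ, ρ ℓ k = 1) :
    1 ≤ ∏ ℓ, ∑ k, w k * ρ ℓ k :=
  calc 1 = ∏ ℓ, ∏ k, ρ ℓ k ^ w k := (prod_weightedGeomMean_eq_one w ρ hρ htel).symm
    _ ≤ ∏ ℓ, ∑ k, w k * ρ ℓ k :=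
      prod_le_prod (fun ℓ _ => prod_nonneg fun k _ => rpow_nonneg (hρ ℓ k) _)
        fun ℓ _ => geom_mean_le_arith_mean_weighted _ w (ρ ℓ) (fun k _ => hw k) hw1
          fun k _ => hρ ℓ k

theorem prod_weightedMean_eq_one_iff (hw : ∀ k, 0 < w k) (hw1 : ∑ k, w k = 1)
    (hρ : ∀ ℓ k, 0 < ρ ℓ k) (htel : ∀ k, ∏ ℓ, ρ ℓ k = 1) :
    ∏ ℓ, ∑ k, w k * ρ ℓ k = 1 ↔ ∀ ℓ, ∀ k k', ρ ℓ k = ρ ℓ k' := by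
  have hρ' : ∀ ℓ k, 0 ≤ ρ ℓ k := fun ℓ k => (hρ ℓ k).le
  rw [← prod_weightedGeomMean_eq_one w ρ hρ' htel, eq_comm,
    prod_eq_prod_iff_of_pos_of_le
      (fun ℓ _ => prod_pos fun k _ => rpow_pos_of_pos (hρ ℓ k) _)
      fun ℓ _ => geom_mean_le_arith_mean_weighted _ w (ρ ℓ) (fun k _ => (hw k).le) hw1
        fun k _ => hρ' ℓ k]
  simp only [geom_mean_eq_arith_mean_weighted_iff_of_pos _ w (ρ _) (fun k _ => hw k) hw1
    (fun k _ => hρ' _ k), mem_univ, forall_const]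

end WeightedMeans

theorem carli_mean_inequality_general (L K : ℕ) (hK : 1 ≤ K)
    (ρ : Fin L → Fin K → ℝ) (hpos : ∀ ℓ k, 0 < ρ ℓ k)
    (htel : ∀ k, ∏ ℓ : Fin L, ρ ℓ k = 1) :
    1 ≤ ∏ ℓ : Fin L, ((1 : ℝ) / K) * ∑ k : Fin K, ρ ℓ k ∧
    ((∏ ℓ : Fin L, ((1 : ℝ) / K) * ∑ k : Fin K, ρ ℓ k) = 1 ↔
      ∀ ℓ, ∀ k k' : Fin K, ρ ℓ k = ρ ℓ k') := by
  have hKpos : (0 : ℝ) < K := by exact_mod_cast hK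
  have hw : ∀ _ : Fin K, (0 : ℝ) < 1 / K := fun _ => by positivity
  have hw1 : ∑ _ : Fin K, (1 : ℝ) / K = 1 := by
    rw [sum_const, card_univ, Fintype.card_fin, nsmul_eq_mul, mul_one_div_cancel hKpos.ne']
  simp only [mul_sum]
  exact ⟨one_le_prod_weightedMean _ ρ (fun k => (hw k).le) hw1 (fun ℓ k => (hpos ℓ k).le) htel,
    prod_weightedMean_eq_one_iff _ ρ hw hw1 hpos htel⟩

/-- Carli mean inequality: if positive price ratios telescope around a cycle
(`∏ ℓ, ρ ℓ k = 1` for each good `k`), then the product over the cycle of the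
Carli indices (unweighted means over goods) is at least 1, with equality iff
on each edge the ratios are constant across goods. -/
theorem carli_mean_inequality (L K : ℕ) (hL : 2 ≤ L) (hK : 1 ≤ K)
    (ρ : Fin L → Fin K → ℝ) (hpos : ∀ ℓ k, 0 < ρ ℓ k)
    (htel : ∀ k, ∏ ℓ : Fin L, ρ ℓ k = 1) :
    1 ≤ ∏ ℓ : Fin L, ((1 : ℝ) / K) * ∑ k : Fin K, ρ ℓ k ∧
    ((∏ ℓ : Fin L, ((1 : ℝ) / K) * ∑ k : Fin K, ρ ℓ k) = 1 ↔
      ∀ ℓ, ∀ k k' : Fin K, ρ ℓ k = ρ ℓ k') :=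
  carli_mean_inequality_general L K hK ρ hpos htel
end

section
/- Let Y_1,...,Y_K be i.i.d. Exponential(1) random variables and let a_1,...,a_K be reals with |a_k| ≤ M for all k and ∑_k a_k = K·μ with μ > 0. Then P(∑_{k=1}^K a_k Y_k ≤ 0) ≤ exp(−K μ² / (4 M²)). -/
open MeasureTheory ProbabilityTheory Finset

/-! Chernoff bound at the negative parameter `-c`: the mgf of `a k * Y k` at `-c` is
`(1 + c * a k)⁻¹ ≤ exp ((c * a k) ^ 2 - c * a k)` as long as `c * a k ≥ -1/2`. Since the `a k`
average to `μ` and are bounded by `M`, we have `μ ≤ M`, so `c = μ / (2 * M ^ 2)` qualifies, and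
summing the exponents gives at most `K * (c ^ 2 * M ^ 2 - c * μ) = -K * μ ^ 2 / (4 * M ^ 2)`. -/

theorem Real.inv_one_add_le_exp_sq_sub {x : ℝ} (hx : -(1 / 2) ≤ x) :
    (1 + x)⁻¹ ≤ Real.exp (x ^ 2 - x) := by
  rw [inv_le_iff_one_le_mul₀ (by linarith)]
  rcases le_total 0 x with hx0 | hx0
  · nlinarith [Real.add_one_le_exp (x ^ 2 - x), pow_nonneg hx0 3]
  · nlinarith [Real.quadratic_le_exp_of_nonneg (show 0 ≤ x ^ 2 - x by nlinarith)]

namespace ProbabilityTheory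

lemma exponentialPDFReal_mul_exp_mul (r t x : ℝ) :
    exponentialPDFReal r x * Real.exp (t * x) =
      (Set.Ici 0).indicator (fun x => r * Real.exp ((t - r) * x)) x := by
  by_cases hx : 0 ≤ x
  · rw [Set.indicator_of_mem (Set.mem_Ici.mpr hx)]
    simp only [exponentialPDFReal, gammaPDFReal, if_pos hx, Real.rpow_one, Real.Gamma_one,
      div_one, sub_self, Real.rpow_zero, mul_one, mul_assoc, ← Real.exp_add]
    rw [show -(r * x) + t * x = (t - r) * x by ring]
  · simp [exponentialPDFReal, gammaPDFReal, hx]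

lemma expMeasure_eq_withDensity (r : ℝ) :
    expMeasure r = volume.withDensity fun x => ENNReal.ofReal (exponentialPDFReal r x) := rfl

lemma integrable_exp_mul_expMeasure {r t : ℝ} (hr : 0 < r) (ht : t < r) :
    Integrable (fun x => Real.exp (t * x)) (expMeasure r) := by
  rw [expMeasure_eq_withDensity, integrable_withDensity_iff_integrable_smul'
    (measurable_exponentialPDFReal r).ennreal_ofReal (ae_of_all _ fun _ => ENNReal.ofReal_lt_top)]
  simp only [ENNReal.toReal_ofReal (exponentialPDFReal_nonneg hr _), smul_eq_mul,
    exponentialPDFReal_mul_exp_mul]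
  rw [integrable_indicator_iff measurableSet_Ici, integrableOn_Ici_iff_integrableOn_Ioi]
  exact (integrableOn_exp_mul_Ioi (by linarith) 0).const_mul r

lemma mgf_id_expMeasure {r t : ℝ} (hr : 0 < r) (ht : t < r) :
    mgf id (expMeasure r) t = r / (r - t) := by
  rw [mgf, expMeasure_eq_withDensity, integral_withDensity_eq_integral_toReal_smul
    (measurable_exponentialPDFReal r).ennreal_ofReal (ae_of_all _ fun _ => ENNReal.ofReal_lt_top)]
  simp only [id, ENNReal.toReal_ofReal (exponentialPDFReal_nonneg hr _), smul_eq_mul,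
    exponentialPDFReal_mul_exp_mul]
  rw [integral_indicator measurableSet_Ici, integral_Ici_eq_integral_Ioi, integral_const_mul,
    integral_exp_mul_Ioi (by linarith), mul_zero, Real.exp_zero,
    ← neg_sub r t, div_neg, neg_div, neg_neg, mul_one_div]

variable {Ω : Type*} [MeasurableSpace Ω] {P : Measure Ω} {Y : Ω → ℝ} {r t : ℝ}

lemma integrable_exp_mul_of_map_eq_expMeasure (hY : AEMeasurable Y P)
    (hlaw : P.map Y = expMeasure r) (hr : 0 < r) (ht : t < r) :
    Integrable (fun ω => Real.exp (t * Y ω)) P :=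
  (hlaw ▸ integrable_exp_mul_expMeasure hr ht :
    Integrable (fun x => Real.exp (t * x)) (P.map Y)).comp_aemeasurable hY

lemma mgf_of_map_eq_expMeasure (hY : AEMeasurable Y P) (hlaw : P.map Y = expMeasure r)
    (hr : 0 < r) (ht : t < r) : mgf Y P t = r / (r - t) := by
  rw [← mgf_id_map hY, hlaw, mgf_id_expMeasure hr ht]

lemma measureReal_sum_mul_le_le_prod_mgf [IsProbabilityMeasure P] {ι : Type*} [Fintype ι]
    {X : ι → Ω → ℝ} (hmeas : ∀ i, Measurable (X i)) (hindep : iIndepFun X P) (a : ι → ℝ)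
    (ε : ℝ) (ht : t ≤ 0) (hint : ∀ i, Integrable (fun ω => Real.exp (a i * t * X i ω)) P) :
    P.real {ω | ∑ i, a i * X i ω ≤ ε} ≤ Real.exp (-t * ε) * ∏ i, mgf (X i) P (a i * t) := by
  set aX : ι → Ω → ℝ := fun i ω => a i * X i ω
  have haX_meas : ∀ i, Measurable (aX i) := fun i => (hmeas i).const_mul (a i)
  have haX_indep : iIndepFun aX P := hindep.comp _ fun i => measurable_const_mul (a i)
  have haX_int : ∀ i ∈ univ, Integrable (fun ω => Real.exp (t * aX i ω)) P := fun i _ => by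
    convert hint i using 3
    ring
  have hchernoff := measure_le_le_exp_mul_mgf ε ht
    (haX_indep.integrable_exp_mul_sum haX_meas haX_int)
  simpa only [aX, Finset.sum_apply, haX_indep.mgf_sum haX_meas, mgf_const_mul] using hchernoff

end ProbabilityTheory

lemma sum_sq_sub_le_card_mul {ι : Type*} [Fintype ι] {a : ι → ℝ} {M μ : ℝ}
    (habs : ∀ i, |a i| ≤ M) (hsum : ∑ i, a i = Fintype.card ι * μ) (c : ℝ) :
    ∑ i, ((c * a i) ^ 2 - c * a i) ≤ Fintype.card ι * ((c * M) ^ 2 - c * μ) := by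
  have hsq : ∀ i, (c * a i) ^ 2 ≤ (c * M) ^ 2 := fun i => by
    rw [mul_pow, mul_pow, ← sq_abs (a i)]
    gcongr
    exact habs i
  calc ∑ i, ((c * a i) ^ 2 - c * a i)
      = ∑ i, (c * a i) ^ 2 - c * ∑ i, a i := by rw [sum_sub_distrib, mul_sum]
    _ ≤ ∑ _i : ι, (c * M) ^ 2 - c * ∑ i, a i := by
      linarith [sum_le_sum fun i (_ : i ∈ univ) => hsq i]
    _ = Fintype.card ι * ((c * M) ^ 2 - c * μ) := by
      rw [hsum, sum_const, card_univ, nsmul_eq_mul]; ring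

lemma neg_half_le_mul_of_sum_eq_card_mul {ι : Type*} [Fintype ι] {a : ι → ℝ} {M μ : ℝ}
    (hM : 0 < M) (hμ : 0 ≤ μ) (habs : ∀ i, |a i| ≤ M) (hsum : ∑ i, a i = Fintype.card ι * μ)
    (i : ι) : -(1 / 2) ≤ μ / (2 * M ^ 2) * a i := by
  obtain ⟨j, -, hj⟩ := exists_le_of_sum_le (univ_nonempty_iff.mpr ⟨i⟩)
    (show ∑ _j : ι, μ ≤ ∑ j, a j by simp [hsum])
  have hμM : μ ≤ M := hj.trans ((le_abs_self _).trans (habs j))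
  calc -(1 / 2) ≤ μ / (2 * M ^ 2) * -M := by
        field_simp; linarith
    _ ≤ μ / (2 * M ^ 2) * a i := by gcongr; exact neg_le_of_abs_le (habs i)

theorem exp_weighted_sum_chernoff_general
    {Ω : Type*} [MeasureSpace Ω] (P : Measure Ω) [IsProbabilityMeasure P]
    (K : ℕ) (Y : Fin K → Ω → ℝ)
    (hmeas : ∀ k, Measurable (Y k))
    (hindep : iIndepFun Y P)
    (hdist : ∀ k, P.map (Y k) = ProbabilityTheory.expMeasure 1)
    (a : Fin K → ℝ) (M μ : ℝ) (hM : 0 < M) (hμ : 0 < μ)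
    (habs : ∀ k, |a k| ≤ M) (hsum : ∑ k, a k = K * μ) :
    P {ω | ∑ k, a k * Y k ω ≤ 0}
      ≤ ENNReal.ofReal (Real.exp (-(K * μ ^ 2) / (4 * M ^ 2))) := by
  -- `c` minimises `c ^ 2 * M ^ 2 - c * μ`, the exponent per summand in the final bound
  set c := μ / (2 * M ^ 2) with hc
  have hca : ∀ k, -(1 / 2) ≤ c * a k :=
    neg_half_le_mul_of_sum_eq_card_mul hM hμ.le habs (by simpa using hsum)
  have hlt : ∀ k, a k * -c < 1 := fun k => by linarith [hca k]
  have hmgf : ∀ k, mgf (Y k) P (a k * -c) ≤ Real.exp ((c * a k) ^ 2 - c * a k) := fun k => by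
    rw [mgf_of_map_eq_expMeasure (hmeas k).aemeasurable (hdist k) one_pos (hlt k),
      show 1 / (1 - a k * -c) = (1 + c * a k)⁻¹ by ring]
    exact Real.inv_one_add_le_exp_sq_sub (hca k)
  have hchernoff := measureReal_sum_mul_le_le_prod_mgf hmeas hindep a 0
    (neg_nonpos.mpr (by positivity : 0 ≤ c)) fun k =>
    integrable_exp_mul_of_map_eq_expMeasure (hmeas k).aemeasurable (hdist k) one_pos (hlt k)
  rw [← ofReal_measureReal]
  gcongr
  calc P.real {ω | ∑ k, a k * Y k ω ≤ 0}
      ≤ ∏ k, mgf (Y k) P (a k * -c) := by simpa using hchernoff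
    _ ≤ ∏ k, Real.exp ((c * a k) ^ 2 - c * a k) :=
      prod_le_prod (fun k _ => mgf_nonneg) fun k _ => hmgf k
    _ = Real.exp (∑ k, ((c * a k) ^ 2 - c * a k)) := (Real.exp_sum _ _).symm
    _ ≤ Real.exp (K * ((c * M) ^ 2 - c * μ)) := by
      gcongr
      simpa using sum_sq_sub_le_card_mul habs (by simpa using hsum) c
    _ = Real.exp (-(K * μ ^ 2) / (4 * M ^ 2)) := by
      rw [hc]; congr 1; field_simp; ring

/-- Chernoff bound: if `Y 1, ..., Y K` are i.i.d. `Exponential(1)` random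
variables and the coefficients `a k` satisfy `|a k| ≤ M` and `∑ k, a k = K * μ`
with `μ > 0`, then `P(∑ k, a k * Y k ≤ 0) ≤ exp (-K * μ^2 / (4 * M^2))`. -/
theorem exp_weighted_sum_chernoff
    {Ω : Type*} [MeasureSpace Ω] (P : Measure Ω) [IsProbabilityMeasure P]
    (K : ℕ) (hK : 1 ≤ K) (Y : Fin K → Ω → ℝ)
    (hmeas : ∀ k, Measurable (Y k))
    (hindep : iIndepFun Y P)
    (hdist : ∀ k, P.map (Y k) = ProbabilityTheory.expMeasure 1)
    (a : Fin K → ℝ) (M μ : ℝ) (hM : 0 < M) (hμ : 0 < μ)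
    (habs : ∀ k, |a k| ≤ M) (hsum : ∑ k, a k = K * μ) :
    P {ω | ∑ k, a k * Y k ω ≤ 0}
      ≤ ENNReal.ofReal (Real.exp (-(K * μ ^ 2) / (4 * M ^ 2))) :=
  exp_weighted_sum_chernoff_general P K Y hmeas hindep hdist a M μ hM hμ habs hsum
end

section
/- Let ρ = (ρ^1,...,ρ^K) with a ≤ ρ^k ≤ b for all k (0 < a ≤ b), and suppose ρ̄ := (1/K)∑_k ρ^k > 1. If w is uniformly distributed on the simplex Δ_{K−1} = {w ∈ ℝ_+^K : ∑_k w^k = 1}, then P(⟨ρ, w⟩ ≤ 1) ≤ exp(−K(ρ̄−1)²/(4(b−a)²)). -/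
/-!
Write `w = Y / ∑ j, Y j` with `Y` i.i.d. `Exponential(1)`. Then `⟨ρ, w⟩ ≤ 1` is the event
`∑ k, (ρ k - 1) * Y k ≤ 0`, and since `E exp(-s Y) = 1 / (1 + s)`, the Chernoff bound with
parameter `t ≥ 0` gives `∏ k, (1 + t (ρ k - 1))⁻¹`. If `a ≤ 1 < b` then `|ρ k - 1| ≤ b - a`, so
`(1 + x)⁻¹ ≤ exp (x² - x)` for `|x| ≤ 1/2` bounds this by `exp (K t² (b - a)² - t K (ρ̄ - 1))`,
and `t = (ρ̄ - 1) / (2 (b - a)²)` gives the claim. If `a > 1` the event is null.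
-/

open MeasureTheory ProbabilityTheory Finset

/-- The uniform distribution on the simplex `Δ_{K-1}` (i.e. `Dirichlet(1,…,1)`),
realised as the law of `Y / (∑ Y)` with `Y k` i.i.d. `Exponential(1)`. -/
noncomputable def simplexUniform (K : ℕ) : Measure (Fin K → ℝ) :=
  (Measure.pi fun _ : Fin K => ProbabilityTheory.expMeasure 1).map
    (fun Y k => Y k / ∑ j, Y j)

theorem Real.exp_sub_sq_le_one_add {x : ℝ} (hx : |x| ≤ 1 / 2) :
    Real.exp (x - x ^ 2) ≤ 1 + x := by
  obtain ⟨hx₁, hx₂⟩ := abs_le.1 hx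
  rcases le_or_gt 0 x with hx₀ | hx₀
  · have h := (abs_le.1 (Real.abs_exp_sub_one_sub_id_le (x := x - x ^ 2)
      (abs_le.2 ⟨by nlinarith, by nlinarith⟩))).2
    nlinarith [mul_nonneg (pow_nonneg hx₀ 3) (by linarith : (0:ℝ) ≤ 2 - x)]
  · have hq := Real.quadratic_le_exp_of_nonneg (x := x ^ 2 - x) (by nlinarith)
    rw [show x - x ^ 2 = -(x ^ 2 - x) by ring, Real.exp_neg,
      inv_le_iff_one_le_mul₀ (Real.exp_pos _)]
    nlinarith [mul_le_mul_of_nonneg_left hq (by linarith : (0:ℝ) ≤ 1 + x)]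

theorem Real.inv_one_add_le_exp {x : ℝ} (hx : |x| ≤ 1 / 2) :
    (1 + x)⁻¹ ≤ Real.exp (x ^ 2 - x) := by
  rw [show x ^ 2 - x = -(x - x ^ 2) by ring, Real.exp_neg]
  exact inv_anti₀ (Real.exp_pos _) (Real.exp_sub_sq_le_one_add hx)

lemma ae_pos_expMeasure (r : ℝ) : ∀ᵐ y ∂expMeasure r, 0 < y := by
  simp only [ae_iff, not_lt]
  change volume.withDensity (exponentialPDF r) (Set.Iic 0) = 0
  rw [withDensity_apply _ measurableSet_Iic, setLIntegral_congr Iio_ae_eq_Iic.symm]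
  exact lintegral_exponentialPDF_of_nonpos le_rfl

lemma ae_pos_pi_expMeasure {ι : Type*} [Fintype ι] {r : ℝ} (hr : 0 < r) :
    ∀ᵐ Y ∂Measure.pi (fun _ : ι => expMeasure r), ∀ k, 0 < Y k := by
  have := isProbabilityMeasure_expMeasure hr
  exact ae_all_iff.2 fun k =>
    (measurePreserving_eval _ k).quasiMeasurePreserving.ae (ae_pos_expMeasure r)

lemma lintegral_exp_neg_mul_expMeasure {r s : ℝ} (hr : 0 < r) (hs : -r < s) :
    ∫⁻ y, ENNReal.ofReal (Real.exp (-(s * y))) ∂expMeasure r = ENNReal.ofReal (r / (r + s)) := by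
  have hrs : 0 < r + s := by linarith
  have hdensity : ∀ y, exponentialPDF r y * ENNReal.ofReal (Real.exp (-(s * y)))
      = (Set.Ici 0).indicator (fun y => ENNReal.ofReal (r * Real.exp (-(r + s) * y))) y := by
    intro y
    rcases lt_or_ge y 0 with hy | hy
    · simp [exponentialPDF_of_neg hy, hy]
    · rw [exponentialPDF_of_nonneg hy, Set.indicator_of_mem (Set.mem_Ici.2 hy),
        ← ENNReal.ofReal_mul (by positivity), mul_assoc, ← Real.exp_add]
      ring_nf
  rw [show expMeasure r = volume.withDensity (exponentialPDF r) from rfl,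
    lintegral_withDensity_eq_lintegral_mul _ (show Measurable (exponentialPDF r) from
      (measurable_exponentialPDFReal r).ennreal_ofReal) (by fun_prop)]
  simp only [Pi.mul_apply, hdensity]
  rw [lintegral_indicator measurableSet_Ici, setLIntegral_congr Ioi_ae_eq_Ici.symm,
    ← ofReal_integral_eq_lintegral_ofReal, integral_const_mul,
    integral_exp_mul_Ioi (by linarith) 0]
  · rw [mul_zero, Real.exp_zero]; congr 1; field_simp
  · exact ((integrableOn_exp_mul_Ioi (by linarith) 0).const_mul r)
  · exact ae_of_all _ fun y => by positivity

lemma pi_expMeasure_setOf_sum_mul_nonpos_le {ι : Type*} [Fintype ι] {r t : ℝ} (hr : 0 < r)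
    (ht : 0 ≤ t) (c : ι → ℝ) (hc : ∀ k, -r < t * c k) :
    Measure.pi (fun _ : ι => expMeasure r) {Y | ∑ k, c k * Y k ≤ 0}
      ≤ ∏ k, ENNReal.ofReal (r / (r + t * c k)) := by
  have := isProbabilityMeasure_expMeasure hr
  set f : ι → ℝ → ENNReal := fun k y => ENNReal.ofReal (Real.exp (-(t * c k * y)))
  have hf : ∀ k, Measurable (f k) := fun k => by fun_prop
  have hmarkov : Measure.pi (fun _ : ι => expMeasure r) {Y | ∑ k, c k * Y k ≤ 0}
      ≤ ∫⁻ Y, ∏ k, f k (Y k) ∂Measure.pi (fun _ : ι => expMeasure r) := by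
    have hsub : {Y : ι → ℝ | ∑ k, c k * Y k ≤ 0} ⊆ {Y | 1 ≤ ∏ k, f k (Y k)} := by
      intro Y (hY : ∑ k, c k * Y k ≤ 0)
      have hexp : ∏ k, f k (Y k) = ENNReal.ofReal (Real.exp (-(t * ∑ k, c k * Y k))) := by
        rw [← ENNReal.ofReal_prod_of_nonneg fun k _ => (Real.exp_pos _).le, ← Real.exp_sum,
          Finset.mul_sum, ← Finset.sum_neg_distrib]
        simp only [mul_assoc]
      show 1 ≤ ∏ k, f k (Y k)
      rw [hexp, ← ENNReal.ofReal_one, ← Real.exp_zero]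
      exact ENNReal.ofReal_le_ofReal (Real.exp_le_exp.2 (by nlinarith))
    calc _ ≤ _ := measure_mono hsub
      _ ≤ _ := by
        simpa using mul_meas_ge_le_lintegral₀ (Finset.measurable_prod univ fun k _ =>
          (hf k).comp (measurable_pi_apply k)).aemeasurable 1
  refine hmarkov.trans_eq ?_
  rw [lintegral_prod_eq_prod_lintegral_of_indepFun univ _
    (iIndepFun_pi fun k => (hf k).aemeasurable) fun k => (hf k).comp (measurable_pi_apply k)]
  refine Finset.prod_congr rfl fun k _ => ?_
  rw [(measurePreserving_eval _ k).lintegral_comp (hf k)]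
  exact lintegral_exp_neg_mul_expMeasure hr (hc k)

lemma pi_expMeasure_setOf_sum_mul_nonpos_eq_zero {ι : Type*} [Fintype ι] [Nonempty ι] {r : ℝ}
    (hr : 0 < r) {c : ι → ℝ} (hc : ∀ k, 0 < c k) :
    Measure.pi (fun _ : ι => expMeasure r) {Y | ∑ k, c k * Y k ≤ 0} = 0 := by
  rw [measure_eq_zero_iff_ae_notMem]
  filter_upwards [ae_pos_pi_expMeasure hr] with Y hY
  exact not_le.2 (Finset.sum_pos (fun k _ => mul_pos (hc k) (hY k)) univ_nonempty)

lemma simplexUniform_setOf_sum_mul_le_one_le {K : ℕ} (ρ : Fin K → ℝ) :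
    simplexUniform K {w | ∑ k, ρ k * w k ≤ 1}
      ≤ Measure.pi (fun _ : Fin K => expMeasure 1) {Y | ∑ k, (ρ k - 1) * Y k ≤ 0} := by
  rw [simplexUniform,
    Measure.map_apply (by fun_prop) (measurableSet_le (by fun_prop) measurable_const)]
  refine measure_mono_ae ?_
  filter_upwards [ae_pos_pi_expMeasure one_pos]
    with Y hY (hw : ∑ k, ρ k * (Y k / ∑ j, Y j) ≤ 1)
  change ∑ k, (ρ k - 1) * Y k ≤ 0
  rcases isEmpty_or_nonempty (Fin K) with hK | hK
  · simp
  have hS : 0 < ∑ j, Y j := Finset.sum_pos (fun j _ => hY j) univ_nonempty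
  simp only [mul_div_assoc', ← Finset.sum_div, div_le_one hS] at hw
  simpa [sub_mul, Finset.sum_sub_distrib] using hw

lemma prod_inv_one_add_mul_le_exp {ι : Type*} [Fintype ι] (x : ι → ℝ) {d t : ℝ}
    (hx : ∀ k, |x k| ≤ d) (ht : 0 ≤ t) (htd : t * d ≤ 1 / 2) :
    ∏ k, (1 + t * x k)⁻¹ ≤ Real.exp (Fintype.card ι * (t * d) ^ 2 - t * ∑ k, x k) := by
  have htx : ∀ k, |t * x k| ≤ t * d := fun k => by
    rw [abs_mul, abs_of_nonneg ht]; exact mul_le_mul_of_nonneg_left (hx k) ht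
  have hpos : ∀ k, 0 < 1 + t * x k := fun k => by
    linarith [(abs_le.1 ((htx k).trans htd)).1]
  have hfactor : ∀ k, (1 + t * x k)⁻¹ ≤ Real.exp ((t * d) ^ 2 - t * x k) := fun k =>
    (Real.inv_one_add_le_exp ((htx k).trans htd)).trans <| Real.exp_le_exp.2 <| by
      nlinarith [sq_abs (t * x k), abs_nonneg (t * x k), htx k]
  calc ∏ k, (1 + t * x k)⁻¹ ≤ ∏ k, Real.exp ((t * d) ^ 2 - t * x k) :=
        Finset.prod_le_prod (fun k _ => (inv_pos.2 (hpos k)).le) fun k _ => hfactor k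
    _ = _ := by
      rw [← Real.exp_sum, Finset.sum_sub_distrib, Finset.sum_const, Finset.card_univ,
        nsmul_eq_mul, Finset.mul_sum]

lemma pi_expMeasure_setOf_sum_mul_nonpos_le_exp {ι : Type*} [Fintype ι] [Nonempty ι]
    (x : ι → ℝ) {d : ℝ} (hd : 0 < d) (hx : ∀ k, |x k| ≤ d) (hsum : 0 ≤ ∑ k, x k) :
    Measure.pi (fun _ : ι => expMeasure 1) {Y | ∑ k, x k * Y k ≤ 0}
      ≤ ENNReal.ofReal (Real.exp (-(∑ k, x k) ^ 2 / (4 * Fintype.card ι * d ^ 2))) := by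
  set S := ∑ k, x k
  set n : ℝ := (Fintype.card ι : ℝ)
  have hn : 0 < n := Nat.cast_pos.2 Fintype.card_pos
  have hSn : S ≤ n * d := by
    simpa using Finset.sum_le_card_nsmul univ x d fun k _ => (abs_le.1 (hx k)).2
  -- the minimiser of `n (t d)² - t S`
  set t := S / (2 * n * d ^ 2) with ht_def
  have ht : 0 ≤ t := by positivity
  have htd : t * d ≤ 1 / 2 := by
    rw [ht_def, div_mul_eq_mul_div, div_le_iff₀ (by positivity)]; nlinarith
  have hlow : ∀ k, -(1 / 2) ≤ t * x k := fun k => by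
    nlinarith [mul_le_mul_of_nonneg_left (abs_le.1 (hx k)).1 ht]
  calc _ ≤ ∏ k, ENNReal.ofReal (1 / (1 + t * x k)) :=
        pi_expMeasure_setOf_sum_mul_nonpos_le one_pos ht x fun k => by linarith [hlow k]
    _ = ENNReal.ofReal (∏ k, (1 + t * x k)⁻¹) := by
        rw [ENNReal.ofReal_prod_of_nonneg fun k _ => inv_nonneg.2 (by linarith [hlow k])]
        simp only [one_div]
    _ ≤ ENNReal.ofReal (Real.exp (n * (t * d) ^ 2 - t * S)) :=
        ENNReal.ofReal_le_ofReal (prod_inv_one_add_mul_le_exp x hx ht htd)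
    _ = _ := by rw [ht_def]; congr 2; field_simp; ring

theorem edge_probability_bound_general (K : ℕ) (hK : 1 ≤ K)
    (a b : ℝ)
    (ρ : Fin K → ℝ) (hbd : ∀ k, a ≤ ρ k ∧ ρ k ≤ b)
    (hmean : 1 < ((1 : ℝ) / K) * ∑ k, ρ k) :
    simplexUniform K {w | ∑ k, ρ k * w k ≤ 1}
      ≤ ENNReal.ofReal
        (Real.exp (-(K * (((1 : ℝ) / K) * ∑ k, ρ k - 1) ^ 2) / (4 * (b - a) ^ 2))) := by
  have : Nonempty (Fin K) := ⟨⟨0, hK⟩⟩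
  have hKpos : (0 : ℝ) < K := by exact_mod_cast hK
  refine (simplexUniform_setOf_sum_mul_le_one_le ρ).trans ?_
  rcases lt_or_ge 1 a with ha1 | ha1
  · rw [pi_expMeasure_setOf_sum_mul_nonpos_eq_zero one_pos fun k =>
      sub_pos.2 (ha1.trans_le (hbd k).1)]
    exact zero_le
  rw [one_div, lt_inv_mul_iff₀ hKpos, mul_one] at hmean
  have hsum : ∑ k, (ρ k - 1) = ∑ k, ρ k - K := by simp [Finset.sum_sub_distrib]
  have hb : 1 < b := (lt_mul_iff_one_lt_right hKpos).1 <| hmean.trans_le <| by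
    simpa using Finset.sum_le_card_nsmul univ ρ b fun k _ => (hbd k).2
  have hdev : ∀ k, |ρ k - 1| ≤ b - a := fun k =>
    abs_le.2 ⟨by linarith [(hbd k).1], by linarith [(hbd k).2]⟩
  refine (pi_expMeasure_setOf_sum_mul_nonpos_le_exp (fun k => ρ k - 1) (by linarith) hdev
    (by linarith)).trans_eq ?_
  rw [hsum, Fintype.card_fin]
  congr 2
  field_simp

/-- Edge probability bound: if `a ≤ ρ k ≤ b` with `0 < a ≤ b` and the Carli
mean `ρ̄ = (1/K) ∑ k, ρ k` exceeds 1, then for `w` uniform on the simplex,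
`P(⟨ρ, w⟩ ≤ 1) ≤ exp (-K (ρ̄ - 1)^2 / (4 (b - a)^2))`. -/
theorem edge_probability_bound (K : ℕ) (hK : 1 ≤ K)
    (a b : ℝ) (ha : 0 < a) (hab : a ≤ b)
    (ρ : Fin K → ℝ) (hbd : ∀ k, a ≤ ρ k ∧ ρ k ≤ b)
    (hmean : 1 < ((1 : ℝ) / K) * ∑ k, ρ k) :
    simplexUniform K {w | ∑ k, ρ k * w k ≤ 1}
      ≤ ENNReal.ofReal
        (Real.exp (-(K * (((1 : ℝ) / K) * ∑ k, ρ k - 1) ^ 2) / (4 * (b - a) ^ 2))) :=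
  edge_probability_bound_general K hK a b ρ hbd hmean
end

section
/- Let T ≥ 2, η > 0, and let ρ̄ : [T] × [T] → ℝ (defined for i ≠ j) satisfy: for every cycle of distinct indices i_1,...,i_L (L ≥ 2, i_{L+1} := i_1), ∑_{ℓ=1}^L (ρ̄_{i_ℓ i_{ℓ+1}} − 1) ≥ η. Set η₀ = η/(2T). Then there exist U_1,...,U_T ∈ ℝ with U_j − U_i ≤ (ρ̄_{ij} − 1) − η₀ for all i ≠ j. -/
open Finset

private lemma injOn_card_le {T k : ℕ} {f : ℕ → Fin T} (hf : Set.InjOn f (Set.Iic k)) :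
    k + 1 ≤ T := by
  have h := Finset.card_le_card_of_injOn (s := Finset.Iic k) (t := (Finset.univ : Finset (Fin T)))
    f (fun a _ => Finset.mem_univ (f a)) ?_
  · simpa using h
  · intro a ha b hb hab
    exact hf (Set.mem_Iic.mpr (Finset.mem_Iic.mp (Finset.mem_coe.mp ha)))
      (Set.mem_Iic.mpr (Finset.mem_Iic.mp (Finset.mem_coe.mp hb))) hab

private lemma aux_feas {T : ℕ} (hT : 0 < T) (w : Fin T → Fin T → ℝ)
    (hpos : ∀ (k : ℕ) (f : ℕ → Fin T), 1 ≤ k → Set.InjOn f (Set.Iic k) →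
      0 < (∑ ℓ ∈ Finset.range k, w (f ℓ) (f (ℓ + 1))) + w (f k) (f 0)) :
    ∃ U : Fin T → ℝ, ∀ i j, i ≠ j → U j - U i ≤ w i j := by
  set W : ℕ → (ℕ → Fin T) → ℝ := fun k f => ∑ ℓ ∈ Finset.range k, w (f ℓ) (f (ℓ + 1)) with hW
  set S : Fin T → Set ℝ := fun j =>
    {x | ∃ k f, Set.InjOn f (Set.Iic k) ∧ f k = j ∧ W k f = x} with hS
  have hne : ∀ j, (S j).Nonempty := by
    intro j
    exact ⟨W 0 (fun _ => j), 0, (fun _ => j),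
      fun a ha b hb _ => by
        simp only [Set.mem_Iic, Nat.le_zero] at ha hb; omega,
      rfl, rfl⟩
  have hfin : ∀ j, (S j).Finite := by
    intro j
    have hsub : S j ⊆ Set.range (fun p : Fin T × (Fin T → Fin T) =>
        ∑ ℓ ∈ Finset.range p.1.val,
          w (p.2 ⟨ℓ % T, Nat.mod_lt _ hT⟩) (p.2 ⟨(ℓ + 1) % T, Nat.mod_lt _ hT⟩)) := by
      rintro x ⟨k, f, hinj, hk, rfl⟩
      have hkT : k < T := injOn_card_le hinj
      refine ⟨(⟨k, hkT⟩, fun m => f m.val), ?_⟩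
      refine Finset.sum_congr rfl ?_
      intro ℓ hℓ
      simp only [Finset.mem_range] at hℓ
      have h1 : ℓ % T = ℓ := Nat.mod_eq_of_lt (hℓ.trans hkT)
      have h2 : (ℓ + 1) % T = ℓ + 1 := Nat.mod_eq_of_lt (by omega)
      simp only [h1, h2]
    exact Set.Finite.subset (Set.finite_range _) hsub
  set U : Fin T → ℝ := fun j => sInf (S j) with hU
  have hmem : ∀ j, U j ∈ S j := fun j => (hne j).csInf_mem (hfin j)
  have hleS : ∀ j x, x ∈ S j → U j ≤ x := fun j x hx => csInf_le (hfin j).bddBelow hx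
  refine ⟨U, fun i j hij => ?_⟩
  obtain ⟨k, f, hinj, hki, hWi⟩ := hmem i
  rw [sub_le_iff_le_add]
  by_cases hj : ∃ m, m ≤ k ∧ f m = j
  · obtain ⟨m, hmk, hmj⟩ := hj
    have hmk' : m < k := lt_of_le_of_ne hmk (by rintro rfl; exact hij (hmj ▸ hki ▸ rfl))
    have hpre : U j ≤ W m f :=
      hleS j _ ⟨m, f, hinj.mono (Set.Iic_subset_Iic.mpr hmk), hmj, rfl⟩
    set c : ℕ → Fin T := fun n => f (m + n) with hcdef
    have hcinj : Set.InjOn c (Set.Iic (k - m)) := by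
      intro a ha b hb h
      simp only [Set.mem_Iic] at ha hb
      have hab : m + a = m + b := hinj (Set.mem_Iic.mpr (by omega)) (Set.mem_Iic.mpr (by omega)) h
      omega
    have hc := hpos (k - m) c (by omega) hcinj
    have he1 : m + (k - m) = k := by omega
    have hck : c (k - m) = i := by show f (m + (k - m)) = i; rw [he1, hki]
    have hc0 : c 0 = j := hmj
    have hceq : ∀ ℓ, c ℓ = f (m + ℓ) := fun ℓ => rfl
    have hsum2 : (∑ ℓ ∈ Finset.range (k - m), w (c ℓ) (c (ℓ + 1)))
        = ∑ ℓ ∈ Finset.range (k - m), w (f (m + ℓ)) (f (m + ℓ + 1)) := rfl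
    rw [hsum2, hck, hc0] at hc
    have hsplit : W k f = W m f + ∑ ℓ ∈ Finset.range (k - m), w (f (m + ℓ)) (f (m + ℓ + 1)) := by
      simp only [hW]
      conv_lhs => rw [show k = m + (k - m) by omega]
      rw [Finset.sum_range_add]
    calc U j ≤ W m f := hpre
    _ ≤ W k f + w i j := by linarith [hc, hsplit]
    _ = w i j + U i := by rw [hWi]; ring
  · push_neg at hj
    set g : ℕ → Fin T := Function.update f (k + 1) j with hg
    have hgk1 : g (k + 1) = j := Function.update_self _ _ _
    have hgeq : ∀ n, n ≤ k → g n = f n := fun n hn =>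
      Function.update_of_ne (by omega) _ _
    have hginj : Set.InjOn g (Set.Iic (k + 1)) := by
      intro a ha b hb h
      simp only [Set.mem_Iic] at ha hb
      by_cases hak : a ≤ k <;> by_cases hbk : b ≤ k
      · exact hinj (Set.mem_Iic.mpr hak) (Set.mem_Iic.mpr hbk)
          (by rwa [hgeq a hak, hgeq b hbk] at h)
      · exact absurd (by rw [← hgeq a hak, h, show b = k + 1 by omega, hgk1]) (hj a hak)
      · exact absurd (by rw [← hgeq b hbk, ← h, show a = k + 1 by omega, hgk1]) (hj b hbk)
      · omega
    have hext : U j ≤ W (k + 1) g := hleS j _ ⟨k + 1, g, hginj, hgk1, rfl⟩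
    have hWg : W (k + 1) g = W k f + w i j := by
      simp only [hW]
      rw [Finset.sum_range_succ]
      congr 1
      · refine Finset.sum_congr rfl fun ℓ hℓ => ?_
        simp only [Finset.mem_range] at hℓ
        rw [hgeq ℓ (by omega), hgeq (ℓ + 1) (by omega)]
      · rw [hgeq k (le_refl k), hki, hgk1]
    rw [hWg, hWi] at hext
    linarith

/-- Strict feasibility of the tightened difference constraints: if every
directed cycle of distinct indices has `∑ (ρ̄ - 1) ≥ η > 0`, then with
`η₀ = η / (2T)` there exist potentials `U` with
`U j - U i ≤ (ρ̄ i j - 1) - η₀` for all `i ≠ j`. -/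
theorem strict_feasibility_limiting_LP (T : ℕ) (hT : 2 ≤ T)
    (η : ℝ) (hη : 0 < η) (ρbar : Fin T → Fin T → ℝ)
    (hcyc : ∀ (L : ℕ), ∀ f : Fin (L + 2) → Fin T, Function.Injective f →
      η ≤ ∑ ℓ : Fin (L + 2), (ρbar (f ℓ) (f (ℓ + 1)) - 1)) :
    ∃ U : Fin T → ℝ, ∀ i j, i ≠ j →
      U j - U i ≤ (ρbar i j - 1) - η / (2 * T) := by
  have hT0 : 0 < T := by omega
  have hTR : (0 : ℝ) < T := by exact_mod_cast hT0
  set η₀ : ℝ := η / (2 * T) with hη₀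
  have hη₀pos : 0 < η₀ := by positivity
  have hpos : ∀ (k : ℕ) (f : ℕ → Fin T), 1 ≤ k → Set.InjOn f (Set.Iic k) →
      0 < (∑ ℓ ∈ Finset.range k, ((ρbar (f ℓ) (f (ℓ + 1)) - 1) - η₀))
        + ((ρbar (f k) (f 0) - 1) - η₀) := by
    intro k f hk hinj
    have hkT : k + 1 ≤ T := injOn_card_le hinj
    obtain ⟨L, rfl⟩ : ∃ L, k = L + 1 := ⟨k - 1, by omega⟩
    set F : Fin (L + 2) → Fin T := fun ℓ => f ℓ.val with hF
    have hFinj : Function.Injective F := by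
      intro a b h
      have hv : (a : ℕ) = (b : ℕ) := hinj (Set.mem_Iic.mpr (by omega)) (Set.mem_Iic.mpr (by omega)) h
      exact Fin.ext hv
    have hcy := hcyc L F hFinj
    have hsum : (∑ ℓ : Fin (L + 2), (ρbar (F ℓ) (F (ℓ + 1)) - 1))
        = (∑ ℓ ∈ Finset.range (L + 1), (ρbar (f ℓ) (f (ℓ + 1)) - 1))
          + (ρbar (f (L + 1)) (f 0) - 1) := by
      rw [Fin.sum_univ_castSucc]
      congr 1
      · rw [← Fin.sum_univ_eq_sum_range (fun ℓ => ρbar (f ℓ) (f (ℓ + 1)) - 1) (L + 1)]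
        refine Finset.sum_congr rfl fun i _ => ?_
        have h1 : F i.castSucc = f i.val := rfl
        have h2 : F (i.castSucc + 1) = f (i.val + 1) := by
          have hv : (i.castSucc + 1).val = i.val + 1 := by
            rw [Fin.val_add_one, if_neg]
            · rfl
            · intro hc
              have := congrArg Fin.val hc
              simp only [Fin.coe_castSucc, Fin.val_last] at this
              omega
          show f (i.castSucc + 1).val = f (i.val + 1)
          rw [hv]
        rw [h1, h2]
      · have h2 : F (Fin.last (L + 1) + 1) = f 0 := by
          rw [Fin.last_add_one]; rfl
        rw [h2]
        rfl
    rw [hsum] at hcy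
    have hsub : (∑ ℓ ∈ Finset.range (L + 1), ((ρbar (f ℓ) (f (ℓ + 1)) - 1) - η₀))
        = (∑ ℓ ∈ Finset.range (L + 1), (ρbar (f ℓ) (f (ℓ + 1)) - 1)) - (L + 1 : ℕ) * η₀ := by
      rw [Finset.sum_sub_distrib, Finset.sum_const, Finset.card_range, nsmul_eq_mul]
    have hbound : ((L : ℝ) + 2) * η₀ ≤ η / 2 := by
      have h1 : ((L : ℝ) + 2) ≤ T := by exact_mod_cast hkT
      have h2 : (T : ℝ) * η₀ = η / 2 := by
        rw [hη₀]; field_simp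
      nlinarith
    rw [hsub]
    push_cast
    nlinarith [hcy, hbound]
  obtain ⟨U, hU⟩ := aux_feas hT0 (fun i j => (ρbar i j - 1) - η₀) hpos
  exact ⟨U, fun i j hij => hU i j hij⟩
end

section
/- Let T ≥ 2 and suppose real numbers e_{ij} (i ≠ j, i,j ∈ [T]) and ρ̄_{ij} satisfy: (i) every cycle of distinct indices has ∑_ℓ (ρ̄_{i_ℓ i_{ℓ+1}} − 1) ≥ η for some η > 0, and (ii) e_{ij} ≥ ρ̄_{ij} − η/(2T) for all i ≠ j. Then there exist real numbers U_1,...,U_T and λ_1,...,λ_T > 0 such that U_j ≤ U_i + λ_i (e_{ij} − 1) for all i ≠ j (the Afriat inequalities are feasible). -/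
/-!
Put `c i j = ρ̄ i j - 1 - η / (2T)`. A simple cycle has at most `T` edges, so its `c`-weight is at
least `η - η / 2 ≥ 0`. With no negative cycles, `U j := inf` of the `c`-weights of simple paths
ending at `j` is a shortest-path potential: `U j ≤ U i + c i j`, since a simple path `P` to `i`
either extends by the edge `i → j`, or already passes through `j`, and then its part up to `j`
is no heavier than `P` followed by `i → j`, the difference being a cycle. Taking `λ = 1`, the
bound on `e` gives `c i j ≤ e i j - 1`.
-/

open Finset

namespace SimplePath

variable {ι : Type*} (w : ι → ι → ℝ)

/-- A path is encoded as `g : ℕ → ι` with its length `n`: the walk `g 0 → g 1 → ⋯ → g n`,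
which is simple when `g` is injective on `Set.Iic n`. -/
def weight (g : ℕ → ι) (n : ℕ) : ℝ :=
  ∑ ℓ ∈ range n, w (g ℓ) (g (ℓ + 1))

def weightsEndingAt (j : ι) : Set ℝ :=
  {x | ∃ (n : ℕ) (g : ℕ → ι), Set.InjOn g (Set.Iic n) ∧ g n = j ∧ weight w g n = x}

def snoc (g : ℕ → ι) (n : ℕ) (j : ι) : ℕ → ι :=
  fun ℓ => if ℓ ≤ n then g ℓ else j

lemma weight_add (g : ℕ → ι) (m k : ℕ) :
    weight w g (m + k) = weight w g m + weight w (fun ℓ => g (m + ℓ)) k := by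
  simp only [weight, sum_range_add, add_assoc]

lemma weight_snoc (g : ℕ → ι) (n : ℕ) (j : ι) :
    weight w (snoc g n j) (n + 1) = weight w g n + w (g n) j := by
  rw [weight, sum_range_succ]
  congr 1
  · exact sum_congr rfl fun ℓ hℓ => by
      have := mem_range.1 hℓ
      simp only [snoc, if_pos this.le, if_pos (Nat.succ_le_of_lt this)]
  · simp [snoc]

lemma injOn_snoc {g : ℕ → ι} {n : ℕ} {j : ι} (hg : Set.InjOn g (Set.Iic n))
    (hj : ∀ m ≤ n, g m ≠ j) : Set.InjOn (snoc g n j) (Set.Iic (n + 1)) := by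
  intro a ha b hb hab
  simp only [Set.mem_Iic] at ha hb
  by_cases han : a ≤ n <;> by_cases hbn : b ≤ n <;> simp only [snoc, han, hbn, if_true,
    if_false] at hab
  · exact hg han hbn hab
  · exact absurd hab (hj a han)
  · exact absurd hab.symm (hj b hbn)
  · omega

lemma sum_cycle_eq_weight_add (g : ℕ → ι) (L : ℕ) :
    ∑ ℓ : Fin (L + 2), w (g ℓ) (g ↑(ℓ + 1)) = weight w g (L + 1) + w (g (L + 1)) (g 0) := by
  rw [Fin.sum_univ_castSucc, weight, ← Fin.sum_univ_eq_sum_range, Fin.last_add_one]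
  simp [Fin.coeSucc_eq_succ]

lemma add_one_le_card [Fintype ι] {g : ℕ → ι} {n : ℕ} (hg : Set.InjOn g (Set.Iic n)) :
    n + 1 ≤ Fintype.card ι := by
  simpa using card_le_card_of_injOn g (s := Iic n) (t := univ) (fun _ _ => mem_univ _)
    (by rwa [coe_Iic])

lemma zero_mem_weightsEndingAt (j : ι) : (0 : ℝ) ∈ weightsEndingAt w j :=
  ⟨0, fun _ => j, fun a ha b hb _ => by simp_all, rfl, by simp [weight]⟩

lemma weightsEndingAt_bddBelow [Fintype ι] (j : ι) : BddBelow (weightsEndingAt w j) := by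
  set M := ∑ a, ∑ b, |w a b|
  have hM : ∀ a b, -M ≤ w a b := fun a b => neg_le_of_abs_le <|
    (single_le_sum (fun b _ => abs_nonneg (w a b)) (mem_univ b)).trans
      (single_le_sum (f := fun a => ∑ b, |w a b|) (fun _ _ => by positivity) (mem_univ a))
  refine ⟨-(Fintype.card ι * M), ?_⟩
  rintro _ ⟨n, g, hg, -, rfl⟩
  have hn : (n : ℝ) ≤ Fintype.card ι := by exact_mod_cast (add_one_le_card hg).trans' n.le_succ
  calc -(Fintype.card ι * M) ≤ ∑ _ℓ ∈ range n, -M := by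
        simp only [sum_const, card_range, nsmul_eq_mul]
        nlinarith [show 0 ≤ M by positivity]
    _ ≤ weight w g n := sum_le_sum fun _ _ => hM _ _

variable {w}

lemma exists_mem_weightsEndingAt_le_add
    (hw : ∀ (L : ℕ) (f : Fin (L + 2) → ι), Function.Injective f →
      0 ≤ ∑ ℓ : Fin (L + 2), w (f ℓ) (f (ℓ + 1)))
    {i j : ι} (hij : i ≠ j) {x : ℝ} (hx : x ∈ weightsEndingAt w i) :
    ∃ y ∈ weightsEndingAt w j, y ≤ x + w i j := by
  obtain ⟨n, g, hg, rfl, rfl⟩ := hx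
  by_cases hj : ∃ m ≤ n, g m = j
  · obtain ⟨m, hmn, rfl⟩ := hj
    obtain ⟨L, rfl⟩ : ∃ L, n = m + (L + 1) := by
      have : m ≠ n := by rintro rfl; exact hij rfl
      exact ⟨n - m - 1, by omega⟩
    refine ⟨weight w g m, ⟨m, g, hg.mono (Set.Iic_subset_Iic.2 (by omega)), rfl, rfl⟩, ?_⟩
    have hcycle := hw L (fun ℓ => g (m + ℓ)) fun a b hab =>
      Fin.ext (by have := hg (Set.mem_Iic.2 (by omega)) (Set.mem_Iic.2 (by omega)) hab; omega)
    rw [sum_cycle_eq_weight_add w (fun ℓ => g (m + ℓ))] at hcycle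
    rw [weight_add]
    simp only [add_zero] at hcycle
    linarith
  · push Not at hj
    exact ⟨_, ⟨n + 1, snoc g n j, injOn_snoc hg hj, by simp [snoc], rfl⟩,
      (weight_snoc w g n j).le⟩

end SimplePath

open SimplePath in
theorem exists_potential_of_cycle_nonneg {ι : Type*} [Fintype ι] (w : ι → ι → ℝ)
    (hw : ∀ (L : ℕ) (f : Fin (L + 2) → ι), Function.Injective f →
      0 ≤ ∑ ℓ : Fin (L + 2), w (f ℓ) (f (ℓ + 1))) :
    ∃ U : ι → ℝ, ∀ i j, i ≠ j → U j ≤ U i + w i j := by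
  refine ⟨fun j => sInf (weightsEndingAt w j), fun i j hij => ?_⟩
  rw [← sub_le_iff_le_add]
  refine le_csInf ⟨0, zero_mem_weightsEndingAt w i⟩ fun x hx => ?_
  obtain ⟨y, hy, hyx⟩ := exists_mem_weightsEndingAt_le_add hw hij hx
  exact sub_le_iff_le_add.2 ((csInf_le (weightsEndingAt_bddBelow w j) hy).trans hyx)

theorem afriat_feasible_general (T : ℕ)
    (η : ℝ) (hη : 0 < η) (ρbar e : Fin T → Fin T → ℝ)
    (hcyc : ∀ (L : ℕ), ∀ f : Fin (L + 2) → Fin T, Function.Injective f →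
      η ≤ ∑ ℓ : Fin (L + 2), (ρbar (f ℓ) (f (ℓ + 1)) - 1))
    (he : ∀ i j, i ≠ j → ρbar i j - η / (2 * T) ≤ e i j) :
    ∃ (U : Fin T → ℝ) (lam : Fin T → ℝ), (∀ i, 0 < lam i) ∧
      ∀ i j, i ≠ j → U j ≤ U i + lam i * (e i j - 1) := by
  set c : Fin T → Fin T → ℝ := fun a b => ρbar a b - 1 - η / (2 * T) with hc
  have hcycle : ∀ (L : ℕ) (f : Fin (L + 2) → Fin T), Function.Injective f →
      0 ≤ ∑ ℓ : Fin (L + 2), c (f ℓ) (f (ℓ + 1)) := by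
    intro L f hf
    have hL : ((L + 2 : ℕ) : ℝ) ≤ T := by
      exact_mod_cast by simpa using Fintype.card_le_of_injective f hf
    have hT : (0 : ℝ) < T := lt_of_lt_of_le (by positivity) hL
    have hslack : ((L + 2 : ℕ) : ℝ) * (η / (2 * T)) ≤ η / 2 := by
      rw [mul_div_assoc', div_le_div_iff₀ (by positivity) two_pos]
      nlinarith
    rw [hc, sum_sub_distrib, sum_const, card_univ, Fintype.card_fin, nsmul_eq_mul]
    linarith [hcyc L f hf]
  obtain ⟨U, hU⟩ := exists_potential_of_cycle_nonneg c hcycle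
  refine ⟨U, fun _ => 1, fun _ => one_pos, fun i j hij => ?_⟩
  linarith [hU i j hij, he i j hij]

/-- Feasibility of the Afriat inequalities: if every cycle of distinct indices
satisfies `∑ (ρ̄ - 1) ≥ η > 0`, and the coefficients satisfy
`e i j ≥ ρ̄ i j - η/(2T)` for `i ≠ j`, then there exist `U` and `λ > 0` with
`U j ≤ U i + λ i * (e i j - 1)` for all `i ≠ j`. -/
theorem afriat_feasible (T : ℕ) (hT : 2 ≤ T)
    (η : ℝ) (hη : 0 < η) (ρbar e : Fin T → Fin T → ℝ)
    (hcyc : ∀ (L : ℕ), ∀ f : Fin (L + 2) → Fin T, Function.Injective f →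
      η ≤ ∑ ℓ : Fin (L + 2), (ρbar (f ℓ) (f (ℓ + 1)) - 1))
    (he : ∀ i j, i ≠ j → ρbar i j - η / (2 * T) ≤ e i j) :
    ∃ (U : Fin T → ℝ) (lam : Fin T → ℝ), (∀ i, 0 < lam i) ∧
      ∀ i j, i ≠ j → U j ≤ U i + lam i * (e i j - 1) :=
  afriat_feasible_general T η hη ρbar e hcyc he
end
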